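/- arXiv:1207.6754 — 5 statements merged into one kernel-verified Lean document; each statement's English description precedes it below -/
import Mathlib

section
/- Let X be a finite set with n ≥ 2 elements. For any probability measure σ on X × X with σ(diagonal) = 0, there exists a subset E ⊆ X such that σ(E × (X \ E)) > 1/4. -/
/-!
Average `σ (E ×ˢ Eᶜ)` over the finitely many measurable sets `E`. A pair `(x, y)` separated by a
measurable set `S` lies in `E ×ˢ Eᶜ` for exactly a quarter of them, because `E ↦ E ∆ S` and
`E ↦ E ∆ Sᶜ` toggle the memberships of `x` and of `y` independently. The pairs separated by no
measurable set form a `σ`-null set, since `σ` kills the diagonal. So the average is `1/4`, while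
`E = ∅` and `E = univ` contribute `0`; hence some `E` does better than `1/4`.
-/

open MeasureTheory Finset
open scoped Classical

section SymmDiffCounting

variable {α : Type*} {M : Finset (Set α)} {T : Set α}

lemma two_mul_card_filter_eq_card (hT : ∀ E ∈ M, symmDiff E T ∈ M) (p : Set α → Prop)
    [DecidablePred p] (hp : ∀ E, p (symmDiff E T) ↔ ¬ p E) :
    2 * #(M.filter p) = #M := by
  have htoggle : #(M.filter p) = #(M.filter (fun E => ¬ p E)) := by
    refine card_nbij' (symmDiff · T) (symmDiff · T) ?_ ?_ ?_ ?_
    · intro E hE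
      simp only [coe_filter, Set.mem_ofPred_eq] at hE ⊢
      exact ⟨hT E hE.1, fun h => (hp E).1 h hE.2⟩
    · intro E hE
      simp only [coe_filter, Set.mem_ofPred_eq] at hE ⊢
      exact ⟨hT E hE.1, (hp E).2 hE.2⟩
    · intro E _
      exact symmDiff_symmDiff_cancel_right T E
    · intro E _
      exact symmDiff_symmDiff_cancel_right T E
  rw [← M.card_filter_add_card_filter_not p, ← htoggle, two_mul]

lemma four_mul_card_filter_mem_notMem_eq_card {S : Set α} {x y : α} (hx : x ∈ S) (hy : y ∉ S)
    (hS : ∀ E ∈ M, symmDiff E S ∈ M) (hSc : ∀ E ∈ M, symmDiff E Sᶜ ∈ M) :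
    4 * #(M.filter fun E => x ∈ E ∧ y ∉ E) = #M := by
  have hy' : 2 * #(M.filter (y ∉ ·)) = #M :=
    two_mul_card_filter_eq_card hSc _ fun E => by simp [Set.mem_symmDiff, hy]
  have hx' : 2 * #((M.filter (y ∉ ·)).filter (x ∈ ·)) = #(M.filter (y ∉ ·)) := by
    refine two_mul_card_filter_eq_card (T := S) (fun E hE => ?_) _
      fun E => by simp [Set.mem_symmDiff, hx]
    simp only [mem_filter] at hE ⊢
    exact ⟨hS E hE.1, by simp [Set.mem_symmDiff, hE.2, hy]⟩
  rw [filter_filter] at hx'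
  simp_rw [and_comm (a := x ∈ _)]
  omega

end SymmDiffCounting

section PairsSplitByMeasurableSets

variable {X : Type*} [MeasurableSpace X]

/-- A measurable `σ`-null `N` containing the diagonal contains these pairs: the section of `N`
at `p.1` is measurable and contains `p.1`. -/
lemma measure_setOf_mem_measurableAtom_eq_zero {σ : Measure (X × X)}
    (hdiag : σ {p : X × X | p.1 = p.2} = 0) :
    σ {p : X × X | p.2 ∈ measurableAtom p.1} = 0 := by
  obtain ⟨N, hdiagN, hN, hN0⟩ := exists_measurable_superset_of_null hdiag
  exact measure_mono_null (fun p hp => mem_of_mem_measurableAtom hp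
    (measurable_prodMk_left hN) (hdiagN rfl)) hN0

variable (X) in
noncomputable def measurableSetFinset [Fintype X] : Finset (Set X) := univ.filter MeasurableSet

variable [Fintype X]

lemma mem_measurableSetFinset {E : Set X} : E ∈ measurableSetFinset X ↔ MeasurableSet E := by
  simp [measurableSetFinset]

lemma four_mul_sum_indicator_prod_compl {p : X × X} (hp : p.2 ∉ measurableAtom p.1) :
    4 * ∑ E ∈ measurableSetFinset X, (E ×ˢ Eᶜ).indicator (1 : X × X → ENNReal) p =
      #(measurableSetFinset X) := by
  obtain ⟨S, hS1, hS, hS2⟩ : ∃ S, p.1 ∈ S ∧ MeasurableSet S ∧ p.2 ∉ S := by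
    simpa [measurableAtom] using hp
  have hcount := four_mul_card_filter_mem_notMem_eq_card hS1 hS2
    (fun E hE => mem_measurableSetFinset.2 ((mem_measurableSetFinset.1 hE).symmDiff hS))
    (fun E hE => mem_measurableSetFinset.2 ((mem_measurableSetFinset.1 hE).symmDiff hS.compl))
  simp only [Set.indicator_apply, Set.mem_prod, Set.mem_compl_iff, Pi.one_apply, sum_boole]
  exact_mod_cast hcount

lemma four_mul_sum_measure_prod_compl {σ : Measure (X × X)}
    (hdiag : σ {p : X × X | p.1 = p.2} = 0) :
    4 * ∑ E ∈ measurableSetFinset X, σ (E ×ˢ Eᶜ) = #(measurableSetFinset X) * σ Set.univ := by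
  have hmeas : ∀ E ∈ measurableSetFinset X, MeasurableSet (E ×ˢ Eᶜ) := fun E hE =>
    (mem_measurableSetFinset.1 hE).prod (mem_measurableSetFinset.1 hE).compl
  rw [sum_congr rfl fun E hE => (lintegral_indicator_one (hmeas E hE)).symm,
    ← lintegral_finsetSum _ fun E hE => measurable_one.indicator (hmeas E hE),
    ← lintegral_const_mul _ (Finset.measurable_sum _ fun E hE => measurable_one.indicator
      (hmeas E hE)), ← lintegral_const]
  refine lintegral_congr_ae ?_
  have hsplit := measure_eq_zero_iff_ae_notMem.1 (measure_setOf_mem_measurableAtom_eq_zero hdiag)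
  filter_upwards [hsplit] with p hp using four_mul_sum_indicator_prod_compl hp

end PairsSplitByMeasurableSets

theorem stmt0_general {X : Type*} [Fintype X] [MeasurableSpace X]
    (σ : Measure (X × X)) [IsProbabilityMeasure σ]
    (hdiag : σ {p : X × X | p.1 = p.2} = 0) :
    ∃ E : Set X, σ (E ×ˢ Eᶜ) > 1 / 4 := by
  by_contra! hle
  have : Nonempty X := (nonempty_of_isProbabilityMeasure σ).map Prod.fst
  have hquarter := four_mul_sum_measure_prod_compl hdiag
  rw [measure_univ, mul_one] at hquarter
  set M := measurableSetFinset X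
  have hempty : ∅ ∈ M := mem_measurableSetFinset.2 MeasurableSet.empty
  have huniv : Set.univ ∈ M.erase ∅ :=
    mem_erase.2 ⟨Set.empty_ne_univ.symm, mem_measurableSetFinset.2 MeasurableSet.univ⟩
  have hsum : ∑ E ∈ M, σ (E ×ˢ Eᶜ) = ∑ E ∈ (M.erase ∅).erase Set.univ, σ (E ×ˢ Eᶜ) := by
    rw [sum_erase _ (by simp), sum_erase _ (by simp)]
  have hbound : 4 * ∑ E ∈ M, σ (E ×ˢ Eᶜ) ≤ #((M.erase ∅).erase Set.univ) :=
    calc 4 * ∑ E ∈ M, σ (E ×ˢ Eᶜ)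
        ≤ 4 * (#((M.erase ∅).erase Set.univ) • (1 / 4)) := by
          rw [hsum]; gcongr; exact sum_le_card_nsmul _ _ _ fun E _ => hle E
      _ = #((M.erase ∅).erase Set.univ) := by
          rw [nsmul_eq_mul, mul_comm, mul_assoc, one_div, ENNReal.inv_mul_cancel (by norm_num)
            (by norm_num), mul_one]
  rw [hquarter, card_erase_of_mem huniv, card_erase_of_mem hempty, Nat.cast_le] at hbound
  have : 0 < #M := card_pos.2 ⟨_, hempty⟩
  omega

theorem stmt0 {X : Type*} [Fintype X] [MeasurableSpace X]
    (hn : 2 ≤ Fintype.card X)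
    (σ : Measure (X × X)) [IsProbabilityMeasure σ]
    (hdiag : σ {p : X × X | p.1 = p.2} = 0) :
    ∃ E : Set X, σ (E ×ˢ Eᶜ) > 1 / 4 :=
  stmt0_general σ hdiag
end

section
/- Let (X,d) be a separable metric space and σ a Borel probability measure on X × X with σ({(x,x) : x ∈ X}) = 0. Then there exists a Borel set E ⊆ X such that σ(E × (X \ E)) > 1/5. -/
/-!
Averaging over all unions `E` of classes of a finite measurable partition of `X`, a pair of
points lying in different classes falls in `E × Eᶜ` for exactly a quarter of the choices of `E`,
so some `E` has `4 σ(E × Eᶜ) ≥ σ{pairs in different classes}`. Since `X` is countably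
separated and the diagonal is `σ`-null, the first `N` coordinates of a measurable injection
`X → (ℕ → Bool)` already label a partition separating pairs of mass `> 4/5`.
-/

open MeasureTheory
open scoped ENNReal

section

open Finset

theorem Finset.four_mul_card_filter_mem_and_notMem {α : Type*} [Fintype α] [DecidableEq α]
    {i j : α} (hij : i ≠ j) :
    4 * #{S : Finset α | i ∈ S ∧ j ∉ S} = 2 ^ Fintype.card α := by
  have hcard : #{S : Finset α | i ∈ S ∧ j ∉ S} = #({i, j}ᶜ : Finset α).powerset := by
    refine card_nbij' (·.erase i) (insert i) ?_ ?_ ?_ ?_ <;> intro S hS <;>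
      simp only [coe_filter, coe_powerset, mem_univ, true_and, Set.mem_ofPred_eq,
        Set.mem_preimage, Set.mem_powerset_iff, coe_subset, subset_iff, mem_compl, mem_insert,
        mem_singleton, mem_erase, not_or] at hS ⊢
    · grind
    · grind
    · exact insert_erase hS.1
    · exact erase_insert fun h => (hS h).1 rfl
  have htwo : 2 ≤ Fintype.card α := by
    simpa [card_pair hij] using card_le_univ ({i, j} : Finset α)
  rw [hcard, card_powerset, card_compl, card_pair hij, show 4 = 2 ^ 2 by rfl, ← pow_add]
  congr 1
  omega

theorem exists_measure_ne_le_four_mul_measure_prod_compl {X ι : Type*} [MeasurableSpace X]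
    [Fintype ι] [DecidableEq ι] [MeasurableSpace ι] [MeasurableSingletonClass ι]
    (σ : Measure (X × X)) {c : X → ι} (hc : Measurable c) :
    ∃ S : Finset ι, σ {p | c p.1 ≠ c p.2} ≤ 4 * σ ((c ⁻¹' S) ×ˢ (c ⁻¹' S)ᶜ) := by
  set D := {p : X × X | c p.1 ≠ c p.2}
  set T : Finset ι → Set (X × X) := fun S => (c ⁻¹' S) ×ˢ (c ⁻¹' S)ᶜ
  have hD : MeasurableSet D :=
    (measurableSet_eq_fun (hc.comp measurable_fst) (hc.comp measurable_snd)).compl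
  have hT (S : Finset ι) : MeasurableSet (T S) :=
    (hc S.measurableSet).prod (hc S.measurableSet).compl
  have hcount (p : X × X) :
      D.indicator (fun _ => (2 : ℝ≥0∞) ^ Fintype.card ι) p ≤ 4 * ∑ S, (T S).indicator 1 p := by
    by_cases h : p ∈ D
    · simp only [Set.indicator, Pi.one_apply, h, if_true, sum_boole, T, Set.mem_prod,
        Set.mem_preimage, mem_coe, Set.mem_compl_iff]
      exact_mod_cast (four_mul_card_filter_mem_and_notMem h).ge
    · simp [h]
  obtain ⟨S, -, hS⟩ := ENNReal.exists_le_of_sum_le univ_nonempty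
    (f := fun _ => σ D) (g := fun S => 4 * σ (T S)) <| calc
      ∑ _S : Finset ι, σ D = 2 ^ Fintype.card ι * σ D := by simp
      _ = ∫⁻ p, D.indicator (fun _ => 2 ^ Fintype.card ι) p ∂σ :=
        (lintegral_indicator_const hD _).symm
      _ ≤ ∫⁻ p, 4 * ∑ S, (T S).indicator 1 p ∂σ := lintegral_mono fun p => hcount p
      _ = ∑ S, 4 * σ (T S) := by
        have hind (S : Finset ι) : Measurable ((T S).indicator (1 : X × X → ℝ≥0∞)) :=
          measurable_one.indicator (hT S)
        rw [lintegral_const_mul _ (Finset.measurable_sum _ fun S _ => hind S),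
          lintegral_finsetSum _ fun S _ => hind S, mul_sum]
        simp only [lintegral_indicator_one (hT _)]
  exact ⟨S, hS⟩

end

theorem exists_measurable_fin_bool_lt_measure_ne {X : Type*} [MeasurableSpace X]
    [MeasurableSpace.CountablySeparated X]
    (σ : Measure (X × X)) [IsProbabilityMeasure σ] (hdiag : σ {p | p.1 = p.2} = 0)
    {r : ℝ≥0∞} (hr : r < 1) :
    ∃ (N : ℕ) (c : X → Fin N → Bool), Measurable c ∧ r < σ {p | c p.1 ≠ c p.2} := by
  obtain ⟨f, hf, hinj⟩ := MeasurableSpace.measurable_injection_nat_bool_of_countablySeparated X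
  let c (N : ℕ) (x : X) (n : Fin N) : Bool := f x n
  have hc_ne {N : ℕ} {x y : X} : c N x ≠ c N y ↔ ∃ n < N, f x n ≠ f y n := by
    simp [c, funext_iff, Fin.exists_iff]
  have hmono : Monotone fun N => {p : X × X | c N p.1 ≠ c N p.2} := by
    intro M N hMN p
    simp only [Set.mem_ofPred_eq, hc_ne]
    exact fun ⟨n, hn, h⟩ => ⟨n, hn.trans_le hMN, h⟩
  have hunion : ⋃ N, {p : X × X | c N p.1 ≠ c N p.2} = {p | p.1 ≠ p.2} := by
    ext p
    simp only [Set.mem_iUnion, Set.mem_ofPred_eq, hc_ne, ← hinj.ne_iff, ne_eq, funext_iff,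
      not_forall]
    exact ⟨fun ⟨_, n, _, h⟩ => ⟨n, h⟩, fun ⟨n, h⟩ => ⟨n + 1, n, n.lt_succ_self, h⟩⟩
  have hoff : σ {p | p.1 ≠ p.2} = 1 := by
    rw [measure_congr (ae_eq_univ.2 ?_), measure_univ]
    simpa [Set.compl_def] using hdiag
  rw [← hoff, ← hunion, hmono.measure_iUnion] at hr
  obtain ⟨N, hN⟩ := lt_iSup_iff.1 hr
  exact ⟨N, c N, measurable_pi_lambda _ fun n => (measurable_pi_apply (n : ℕ)).comp hf, hN⟩

theorem stmt1 {X : Type*} [MetricSpace X] [TopologicalSpace.SeparableSpace X]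
    [MeasurableSpace X] [BorelSpace X]
    (σ : Measure (X × X)) [IsProbabilityMeasure σ]
    (hdiag : σ {p : X × X | p.1 = p.2} = 0) :
    ∃ E : Set X, MeasurableSet E ∧ σ (E ×ˢ Eᶜ) > 1 / 5 := by
  have : SecondCountableTopology X := UniformSpace.secondCountable_of_separable X
  obtain ⟨N, c, hc, hcut⟩ := exists_measurable_fin_bool_lt_measure_ne σ hdiag
    (r := 4 / 5) (ENNReal.div_lt_of_lt_mul (by norm_num))
  obtain ⟨S, hS⟩ := exists_measure_ne_le_four_mul_measure_prod_compl σ hc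
  refine ⟨c ⁻¹' S, hc S.measurableSet, ?_⟩
  have h4 : 4 * (1 / 5 : ℝ≥0∞) < 4 * σ ((c ⁻¹' S) ×ˢ (c ⁻¹' S)ᶜ) := by
    rw [mul_one_div]
    exact hcut.trans_le hS
  exact (ENNReal.mul_lt_mul_iff_right (by norm_num) (by norm_num)).1 h4
end

section
/- Let (X,d) be a geodesic metric space, t ∈ (0,1), and let γ¹, γ² be constant-speed geodesics in X with γ¹_t = γ²_t and d(γ¹_0, γ¹_1) = d(γ²_0, γ²_1). Suppose d²(γ¹_0, γ¹_1) + d²(γ²_0, γ²_1) ≤ d²(γ¹_0, γ²_1) + d²(γ²_0, γ¹_1). Then the curve γ defined by γ|_{[0,t]} = γ¹|_{[0,t]} and γ|_{[t,1]} = γ²|_{[t,1]} is a constant-speed geodesic from γ¹_0 to γ²_1. -/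
/-!
Both geodesics have length `L` and meet at time `t`, so by the triangle inequality through the
meeting point the cross distances `d(γ¹₀, γ²₁)` and `d(γ²₀, γ¹₁)` are at most `L`. The cyclical
monotonicity inequality `2L² ≤ d²(γ¹₀, γ²₁) + d²(γ²₀, γ¹₁)` then forces `d(γ¹₀, γ²₁) = L`. For
`a ≤ t ≤ b`, the triangle inequality through `γ_t` gives `d(γ¹_a, γ²_b) ≤ (b - a) L`, while the
chain `γ¹₀, γ¹_a, γ²_b, γ²₁`, whose length is at least `d(γ¹₀, γ²₁) = L`, gives the reverse inequality.
-/

def IsGeodesic {X : Type*} [MetricSpace X] (γ : ℝ → X) : Prop :=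
  ∀ a ∈ Set.Icc (0:ℝ) 1, ∀ b ∈ Set.Icc (0:ℝ) 1,
    dist (γ a) (γ b) = |a - b| * dist (γ 0) (γ 1)

open Set

namespace IsGeodesic

variable {X : Type*} [MetricSpace X]

theorem dist_eq_of_le {γ : ℝ → X} (h : IsGeodesic γ) {a b : ℝ} (ha : a ∈ Icc (0:ℝ) 1)
    (hb : b ∈ Icc (0:ℝ) 1) (hab : a ≤ b) : dist (γ a) (γ b) = (b - a) * dist (γ 0) (γ 1) := by
  rw [h a ha b hb, abs_sub_comm, abs_of_nonneg (sub_nonneg.2 hab)]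

theorem of_dist_eq_of_le {γ : ℝ → X} {L : ℝ}
    (h : ∀ a ∈ Icc (0:ℝ) 1, ∀ b ∈ Icc (0:ℝ) 1, a ≤ b → dist (γ a) (γ b) = (b - a) * L) :
    IsGeodesic γ := by
  have h01 : (0:ℝ) ∈ Icc (0:ℝ) 1 := left_mem_Icc.2 zero_le_one
  have h11 : (1:ℝ) ∈ Icc (0:ℝ) 1 := right_mem_Icc.2 zero_le_one
  have hL : dist (γ 0) (γ 1) = L := by simpa using h 0 h01 1 h11 zero_le_one
  intro a ha b hb
  rw [hL]
  rcases le_total a b with hab | hba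
  · rw [h a ha b hb hab, abs_sub_comm, abs_of_nonneg (sub_nonneg.2 hab)]
  · rw [dist_comm, h b hb a ha hba, abs_of_nonneg (sub_nonneg.2 hba)]

variable {γ₁ γ₂ : ℝ → X} {t : ℝ}

theorem dist_le_of_apply_eq (h₁ : IsGeodesic γ₁) (h₂ : IsGeodesic γ₂) (heq : γ₁ t = γ₂ t)
    (ht : t ∈ Icc (0:ℝ) 1) (hlen : dist (γ₁ 0) (γ₁ 1) = dist (γ₂ 0) (γ₂ 1)) {a b : ℝ}
    (ha : a ∈ Icc (0:ℝ) 1) (hb : b ∈ Icc (0:ℝ) 1) (hat : a ≤ t) (htb : t ≤ b) :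
    dist (γ₁ a) (γ₂ b) ≤ (b - a) * dist (γ₁ 0) (γ₁ 1) :=
  calc dist (γ₁ a) (γ₂ b) ≤ dist (γ₁ a) (γ₁ t) + dist (γ₂ t) (γ₂ b) :=
        heq ▸ dist_triangle _ _ _
    _ = (t - a) * dist (γ₁ 0) (γ₁ 1) + (b - t) * dist (γ₁ 0) (γ₁ 1) := by
        rw [h₁.dist_eq_of_le ha ht hat, h₂.dist_eq_of_le ht hb htb, hlen]
    _ = (b - a) * dist (γ₁ 0) (γ₁ 1) := by ring

theorem dist_eq_of_apply_eq (h₁ : IsGeodesic γ₁) (h₂ : IsGeodesic γ₂) (heq : γ₁ t = γ₂ t)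
    (ht : t ∈ Icc (0:ℝ) 1) (hlen : dist (γ₁ 0) (γ₁ 1) = dist (γ₂ 0) (γ₂ 1))
    (hcross : dist (γ₁ 0) (γ₂ 1) = dist (γ₁ 0) (γ₁ 1)) {a b : ℝ}
    (ha : a ∈ Icc (0:ℝ) 1) (hb : b ∈ Icc (0:ℝ) 1) (hat : a ≤ t) (htb : t ≤ b) :
    dist (γ₁ a) (γ₂ b) = (b - a) * dist (γ₁ 0) (γ₁ 1) := by
  have h01 : (0:ℝ) ∈ Icc (0:ℝ) 1 := left_mem_Icc.2 zero_le_one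
  have h11 : (1:ℝ) ∈ Icc (0:ℝ) 1 := right_mem_Icc.2 zero_le_one
  have hchain : dist (γ₁ 0) (γ₂ 1) ≤ dist (γ₁ 0) (γ₁ a) + dist (γ₁ a) (γ₂ b) + dist (γ₂ b) (γ₂ 1) :=
    dist_triangle4 _ _ _ _
  rw [hcross, h₁.dist_eq_of_le h01 ha ha.1, h₂.dist_eq_of_le hb h11 hb.2, ← hlen] at hchain
  have := dist_le_of_apply_eq h₁ h₂ heq ht hlen ha hb hat htb
  linarith

theorem dist_cross_eq_of_sq_add_sq_le (h₁ : IsGeodesic γ₁) (h₂ : IsGeodesic γ₂)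
    (heq : γ₁ t = γ₂ t) (ht : t ∈ Icc (0:ℝ) 1)
    (hlen : dist (γ₁ 0) (γ₁ 1) = dist (γ₂ 0) (γ₂ 1))
    (hcm : dist (γ₁ 0) (γ₁ 1) ^ 2 + dist (γ₂ 0) (γ₂ 1) ^ 2 ≤
      dist (γ₁ 0) (γ₂ 1) ^ 2 + dist (γ₂ 0) (γ₁ 1) ^ 2) :
    dist (γ₁ 0) (γ₂ 1) = dist (γ₁ 0) (γ₁ 1) := by
  have h01 : (0:ℝ) ∈ Icc (0:ℝ) 1 := left_mem_Icc.2 zero_le_one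
  have h11 : (1:ℝ) ∈ Icc (0:ℝ) 1 := right_mem_Icc.2 zero_le_one
  have hA := dist_le_of_apply_eq h₁ h₂ heq ht hlen h01 h11 ht.1 ht.2
  have hB := dist_le_of_apply_eq h₂ h₁ heq.symm ht hlen.symm h01 h11 ht.1 ht.2
  rw [← hlen] at hB hcm
  simp only [sub_zero, one_mul] at hA hB
  nlinarith [dist_nonneg (x := γ₁ 0) (y := γ₂ 1), dist_nonneg (x := γ₂ 0) (y := γ₁ 1)]

theorem piecewise (h₁ : IsGeodesic γ₁) (h₂ : IsGeodesic γ₂) (heq : γ₁ t = γ₂ t)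
    (ht : t ∈ Icc (0:ℝ) 1) (hlen : dist (γ₁ 0) (γ₁ 1) = dist (γ₂ 0) (γ₂ 1))
    (hcross : dist (γ₁ 0) (γ₂ 1) = dist (γ₁ 0) (γ₁ 1)) :
    IsGeodesic (fun x => if x ≤ t then γ₁ x else γ₂ x) := by
  refine of_dist_eq_of_le (L := dist (γ₁ 0) (γ₁ 1)) fun a ha b hb hab => ?_
  by_cases hbt : b ≤ t
  · simp only [if_pos hbt, if_pos (hab.trans hbt)]
    exact h₁.dist_eq_of_le ha hb hab
  by_cases hat : a ≤ t
  · simp only [if_pos hat, if_neg hbt]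
    exact dist_eq_of_apply_eq h₁ h₂ heq ht hlen hcross ha hb hat (le_of_not_ge hbt)
  · simp only [if_neg hat, if_neg hbt]
    rw [hlen]
    exact h₂.dist_eq_of_le ha hb hab

end IsGeodesic

theorem stmt6 {X : Type*} [MetricSpace X]
    (γ1 γ2 : ℝ → X) (h1 : IsGeodesic γ1) (h2 : IsGeodesic γ2)
    (t : ℝ) (ht : t ∈ Set.Ioo (0:ℝ) 1)
    (heq : γ1 t = γ2 t)
    (hlen : dist (γ1 0) (γ1 1) = dist (γ2 0) (γ2 1))
    (hcm : dist (γ1 0) (γ1 1) ^ 2 + dist (γ2 0) (γ2 1) ^ 2 ≤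
      dist (γ1 0) (γ2 1) ^ 2 + dist (γ2 0) (γ1 1) ^ 2) :
    IsGeodesic (fun x => if x ≤ t then γ1 x else γ2 x) ∧
    (fun x => if x ≤ t then γ1 x else γ2 x) 0 = γ1 0 ∧
    (fun x => if x ≤ t then γ1 x else γ2 x) 1 = γ2 1 := by
  have htI : t ∈ Icc (0:ℝ) 1 := Ioo_subset_Icc_self ht
  have hcross := h1.dist_cross_eq_of_sq_add_sq_le h2 heq htI hlen hcm
  exact ⟨h1.piecewise h2 heq htI hlen hcross, if_pos ht.1.le, if_neg (not_le.2 ht.2)⟩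
end

section
/- Let (X,d) be a metric space, t ∈ (0,1), and let γ¹, γ² be constant-speed geodesics with γ¹_t = γ²_t. If d²(γ¹_0, γ¹_1) + d²(γ²_0, γ²_1) ≤ d²(γ¹_0, γ²_1) + d²(γ²_0, γ¹_1), then l(γ¹) = l(γ²), where l(γ) = d(γ_0, γ_1). -/
namespace IsGeodesic

variable {X : Type*} [MetricSpace X] {γ : ℝ → X}

theorem dist_zero_left (hγ : IsGeodesic γ) {t : ℝ} (ht : t ∈ Set.Icc (0:ℝ) 1) :
    dist (γ 0) (γ t) = t * dist (γ 0) (γ 1) := by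
  rw [hγ 0 (Set.left_mem_Icc.2 zero_le_one) t ht, zero_sub, abs_neg, abs_of_nonneg ht.1]

theorem dist_one_right (hγ : IsGeodesic γ) {t : ℝ} (ht : t ∈ Set.Icc (0:ℝ) 1) :
    dist (γ t) (γ 1) = (1 - t) * dist (γ 0) (γ 1) := by
  rw [hγ t ht 1 (Set.right_mem_Icc.2 zero_le_one), abs_sub_comm, abs_of_nonneg (sub_nonneg.2 ht.2)]

theorem dist_le_of_apply_eq_s7 {γ' : ℝ → X} (hγ : IsGeodesic γ) (hγ' : IsGeodesic γ')
    {t : ℝ} (ht : t ∈ Set.Icc (0:ℝ) 1) (heq : γ t = γ' t) :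
    dist (γ 0) (γ' 1) ≤ t * dist (γ 0) (γ 1) + (1 - t) * dist (γ' 0) (γ' 1) :=
  calc dist (γ 0) (γ' 1) ≤ dist (γ 0) (γ t) + dist (γ t) (γ' 1) := dist_triangle _ _ _
    _ = t * dist (γ 0) (γ 1) + (1 - t) * dist (γ' 0) (γ' 1) := by
      rw [hγ.dist_zero_left ht, heq, hγ'.dist_one_right ht]

end IsGeodesic

theorem sq_convexComb_add_sq_convexComb (a b t : ℝ) :
    (t * a + (1 - t) * b) ^ 2 + (t * b + (1 - t) * a) ^ 2
      = a ^ 2 + b ^ 2 - 2 * t * (1 - t) * (a - b) ^ 2 := by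
  ring

theorem eq_of_sq_add_sq_le_sq_convexComb_add {a b t : ℝ} (ht : t ∈ Set.Ioo (0:ℝ) 1)
    (h : a ^ 2 + b ^ 2 ≤ (t * a + (1 - t) * b) ^ 2 + (t * b + (1 - t) * a) ^ 2) : a = b := by
  rw [sq_convexComb_add_sq_convexComb] at h
  have hpos : 0 < 2 * t * (1 - t) := by
    have := ht.1; have := sub_pos.2 ht.2; positivity
  have hsq : (a - b) ^ 2 ≤ 0 := nonpos_of_mul_nonpos_right (by linarith) hpos
  exact sub_eq_zero.1 (pow_eq_zero_iff two_ne_zero |>.1 (le_antisymm hsq (sq_nonneg _)))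

theorem stmt7 {X : Type*} [MetricSpace X]
    (γ1 γ2 : ℝ → X) (h1 : IsGeodesic γ1) (h2 : IsGeodesic γ2)
    (t : ℝ) (ht : t ∈ Set.Ioo (0:ℝ) 1)
    (heq : γ1 t = γ2 t)
    (hcm : dist (γ1 0) (γ1 1) ^ 2 + dist (γ2 0) (γ2 1) ^ 2 ≤
      dist (γ1 0) (γ2 1) ^ 2 + dist (γ2 0) (γ1 1) ^ 2) :
    dist (γ1 0) (γ1 1) = dist (γ2 0) (γ2 1) := by
  have htI : t ∈ Set.Icc (0:ℝ) 1 := Set.Ioo_subset_Icc_self ht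
  have b12 := h1.dist_le_of_apply_eq_s7 h2 htI heq
  have b21 := h2.dist_le_of_apply_eq_s7 h1 htI heq.symm
  refine eq_of_sq_add_sq_le_sq_convexComb_add ht (hcm.trans (add_le_add ?_ ?_))
  · exact pow_le_pow_left₀ dist_nonneg b12 2
  · exact pow_le_pow_left₀ dist_nonneg b21 2
end

section
/- Let (X,d) be a complete separable metric space. The set B¹ of pairs (γ¹,γ²) of geodesics that agree on [0,T], are distinct, and for which {t ∈ [0,1] : γ¹_t ≠ γ²_t} is an interval, is a Borel subset of Geo(X) × Geo(X). -/
/-!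
Agreeing on `[0, T]` is a closed condition and distinctness an open one, since evaluation at a
fixed time is continuous. The interval condition fails iff there are times `x < z < y` at which
the curves differ, agree and differ again; choosing rationals `x < a ≤ z ≤ b < y` writes this as a
countable union over `a, b` of (open) ∩ (closed) ∩ (open) sets, the middle one being closed as the
projection of a closed set along the compact factor `[a, b]`. The argument applies verbatim to
pairs of continuous paths, and `B¹` is the trace of that Borel set on `Geo(X)²`.
-/

def IsGeodesicI {X : Type*} [MetricSpace X] (γ : C(unitInterval, X)) : Prop :=
  ∀ s t : unitInterval, dist (γ s) (γ t) = |(s : ℝ) - (t : ℝ)| * dist (γ 0) (γ 1)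

open Set

theorem not_ordConnected_iff_exists_mem_dense {α : Type*} [LinearOrder α] [TopologicalSpace α]
    [OrderClosedTopology α] [DenselyOrdered α] {D : Set α} (hD : Dense D) {U : Set α} :
    ¬ U.OrdConnected ↔
      ∃ a ∈ D, ∃ b ∈ D, (∃ x ∈ U, x < a) ∧ (∃ z ∉ U, z ∈ Icc a b) ∧ ∃ y ∈ U, b < y := by
  constructor
  · intro hU
    rw [ordConnected_iff] at hU
    push Not at hU
    obtain ⟨x, hx, y, hy, -, hsub⟩ := hU
    obtain ⟨z, ⟨hxz, hzy⟩, hz⟩ := not_subset.mp hsub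
    have hxz : x < z := hxz.lt_of_ne (by rintro rfl; exact hz hx)
    have hzy : z < y := hzy.lt_of_ne (by rintro rfl; exact hz hy)
    obtain ⟨a, haD, hxa, haz⟩ := hD.exists_between hxz
    obtain ⟨b, hbD, hzb, hby⟩ := hD.exists_between hzy
    exact ⟨a, haD, b, hbD, ⟨x, hx, hxa⟩, ⟨z, hz, haz.le, hzb.le⟩, ⟨y, hy, hby⟩⟩
  · rintro ⟨a, -, b, -, ⟨x, hx, hxa⟩, ⟨z, hz, haz, hzb⟩, ⟨y, hy, hby⟩⟩ hU
    exact hz (hU.out hx hy ⟨(hxa.trans_le haz).le, (hzb.trans_lt hby).le⟩)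

theorem measurableSet_setOf_ordConnected_slice {Y α : Type*} [TopologicalSpace Y]
    [MeasurableSpace Y] [OpensMeasurableSpace Y] [LinearOrder α] [TopologicalSpace α]
    [OrderClosedTopology α] [DenselyOrdered α] [CompactSpace α]
    [TopologicalSpace.SeparableSpace α] {W : Set (Y × α)} (hW : IsOpen W) :
    MeasurableSet {y | {s | (y, s) ∈ W}.OrdConnected} := by
  obtain ⟨D, hDc, hD⟩ := TopologicalSpace.exists_countable_dense α
  have hbad : {y | {s | (y, s) ∈ W}.OrdConnected}ᶜ =
      ⋃ a ∈ D, ⋃ b ∈ D, Prod.fst '' (W ∩ univ ×ˢ Iio a) ∩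
        Prod.fst '' (Wᶜ ∩ univ ×ˢ Icc a b) ∩ Prod.fst '' (W ∩ univ ×ˢ Ioi b) := by
    ext y
    simp only [mem_compl_iff, mem_ofPred_eq, not_ordConnected_iff_exists_mem_dense hD,
      mem_iUnion, mem_inter_iff, mem_image, Prod.exists, mem_prod, mem_univ, true_and,
      exists_prop, exists_and_right, exists_eq_right, mem_Iio, mem_Ioi]
    simp only [and_assoc]
  have hopen (V : Set α) (hV : IsOpen V) : IsOpen (Prod.fst '' (W ∩ univ ×ˢ V)) :=
    isOpenMap_fst _ (hW.inter (isOpen_univ.prod hV))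
  have hclosed (a b : α) : IsClosed (Prod.fst '' (Wᶜ ∩ univ ×ˢ Icc a b)) :=
    isClosedMap_fst_of_compactSpace _ (hW.isClosed_compl.inter (isClosed_univ.prod isClosed_Icc))
  rw [← compl_compl {y | _}, hbad, MeasurableSet.compl_iff]
  exact .biUnion hDc fun a _ ↦ .biUnion hDc fun b _ ↦
    ((hopen _ isOpen_Iio).measurableSet.inter (hclosed a b).measurableSet).inter
      (hopen _ isOpen_Ioi).measurableSet

theorem measurableSet_eqOn_ne_ordConnected {X : Type*} [TopologicalSpace X] [T2Space X]
    [MeasurableSpace (C(unitInterval, X) × C(unitInterval, X))]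
    [OpensMeasurableSpace (C(unitInterval, X) × C(unitInterval, X))] (T : ℝ) :
    MeasurableSet {p : C(unitInterval, X) × C(unitInterval, X) |
      (∀ s : unitInterval, (s : ℝ) ≤ T → p.1 s = p.2 s) ∧ p.1 ≠ p.2 ∧
        {s : unitInterval | p.1 s ≠ p.2 s}.OrdConnected} := by
  have hagree : IsClosed {p : C(unitInterval, X) × C(unitInterval, X) |
      ∀ s : unitInterval, (s : ℝ) ≤ T → p.1 s = p.2 s} := by
    simp only [ofPred_forall]
    exact isClosed_iInter fun s ↦ isClosed_iInter fun _ ↦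
      isClosed_eq (by fun_prop) (by fun_prop)
  have heval : Continuous fun q : (C(unitInterval, X) × C(unitInterval, X)) × unitInterval ↦
      (q.1.1 q.2, q.1.2 q.2) := by
    fun_prop
  exact hagree.measurableSet.inter (isClosed_diagonal.isOpen_compl.measurableSet.inter
    (measurableSet_setOf_ordConnected_slice (isClosed_diagonal.isOpen_compl.preimage heval)))

theorem stmt15_general {X : Type*} [MetricSpace X] (T : ℝ) :
    @MeasurableSet ({γ : C(unitInterval, X) // IsGeodesicI γ} ×
        {γ : C(unitInterval, X) // IsGeodesicI γ})
      (borel _)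
      {p : {γ : C(unitInterval, X) // IsGeodesicI γ} ×
          {γ : C(unitInterval, X) // IsGeodesicI γ} |
        (∀ s : unitInterval, (s : ℝ) ≤ T → p.1.1 s = p.2.1 s) ∧
        p.1 ≠ p.2 ∧
        Set.OrdConnected {s : unitInterval | p.1.1 s ≠ p.2.1 s}} := by
  borelize (C(unitInterval, X) × C(unitInterval, X))
  borelize ({γ : C(unitInterval, X) // IsGeodesicI γ} × {γ : C(unitInterval, X) // IsGeodesicI γ})
  have hval := (continuous_subtype_val (p := IsGeodesicI (X := X))).prodMap
    (continuous_subtype_val (p := IsGeodesicI (X := X)))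
  convert hval.measurable (measurableSet_eqOn_ne_ordConnected T) using 1
  ext p
  simp [Subtype.ext_iff]

theorem stmt15 {X : Type*} [MetricSpace X] [CompleteSpace X]
    [SecondCountableTopology X] (T : ℝ) (hT : T ∈ Set.Ioo (0:ℝ) 1) :
    @MeasurableSet ({γ : C(unitInterval, X) // IsGeodesicI γ} ×
        {γ : C(unitInterval, X) // IsGeodesicI γ})
      (borel _)
      {p : {γ : C(unitInterval, X) // IsGeodesicI γ} ×
          {γ : C(unitInterval, X) // IsGeodesicI γ} |
        (∀ s : unitInterval, (s : ℝ) ≤ T → p.1.1 s = p.2.1 s) ∧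
        p.1 ≠ p.2 ∧
        Set.OrdConnected {s : unitInterval | p.1.1 s ≠ p.2.1 s}} :=
  stmt15_general T
end
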